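/- For c = 1, using D₋₁(iλ) = e^{λ²/4}·∫₀^∞ e^{-iλx - x²/2} dx, the density ρ₁(λ) = 1/(√(2π)·|D₋₁(iλ)|²) satisfies the tail asymptotic ρ₁(λ) ~ (const)·λ²·e^{-λ²/2} as |λ| → ∞. -/

import Mathlib

open MeasureTheory Complex Filter

/-- The parabolic cylinder function of index `-1`:
`D₋₁(z) = e^{-z²/4}·∫₀^∞ e^{-zx - x²/2} dx`. -/
noncomputable def parabolicDm1 (z : ℂ) : ℂ :=
  Complex.exp (-z ^ 2 / 4) * ∫ x in Set.Ioi (0 : ℝ), Complex.exp (-z * x - (x : ℂ) ^ 2 / 2)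

open scoped FourierTransform Real Topology

noncomputable def Fint (l : ℝ) : ℂ :=
  ∫ x in Set.Ioi (0 : ℝ), Complex.exp (-(Complex.I * l) * x - (x : ℂ) ^ 2 / 2)

noncomputable def Rint (l : ℝ) : ℂ :=
  ∫ x in Set.Ioi (0 : ℝ), (x : ℂ) * Complex.exp (-(Complex.I * l) * x - (x : ℂ) ^ 2 / 2)

lemma re_aux (l x : ℝ) : (-(Complex.I * l) * x - (x : ℂ) ^ 2 / 2).re = -(1/2) * x ^ 2 := by
  simp [Complex.div_re, Complex.normSq, pow_two]
  ring

lemma norm_aux (l x : ℝ) :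
    ‖Complex.exp (-(Complex.I * l) * x - (x : ℂ) ^ 2 / 2)‖
      = Real.exp (-(1/2) * x ^ 2) := by
  rw [Complex.norm_exp, re_aux]

lemma integrableG (l : ℝ) :
    IntegrableOn (fun x : ℝ => Complex.exp (-(Complex.I * l) * x - (x : ℂ) ^ 2 / 2))
      (Set.Ioi 0) := by
  apply Integrable.mono' ((integrable_exp_neg_mul_sq (by norm_num : (0:ℝ) < 1/2)).restrict)
  · apply Continuous.aestronglyMeasurable
    fun_prop
  · filter_upwards with x
    rw [norm_aux]

lemma integrableXG (l : ℝ) :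
    IntegrableOn (fun x : ℝ => (x : ℂ) * Complex.exp (-(Complex.I * l) * x - (x : ℂ) ^ 2 / 2))
      (Set.Ioi 0) := by
  have hbase : Integrable (fun x : ℝ => |x * Real.exp (-(1/2) * x ^ 2)|) := by
    have := integrable_rpow_mul_exp_neg_mul_sq (by norm_num : (0:ℝ) < 1/2)
      (by norm_num : (-1:ℝ) < 1)
    simp only [Real.rpow_one] at this
    exact this.abs
  apply Integrable.mono' hbase.restrict
  · apply Continuous.aestronglyMeasurable
    fun_prop
  · filter_upwards with x
    simp only [norm_mul, norm_aux, Complex.norm_real, Real.norm_eq_abs]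
    rw [abs_mul, _root_.abs_of_nonneg (Real.exp_nonneg _)]

lemma hasDerivG (l : ℝ) (x : ℝ) :
    HasDerivAt (fun y : ℝ => Complex.exp (-(Complex.I * l) * y - (y : ℂ) ^ 2 / 2))
      ((-(Complex.I * l) - x) * Complex.exp (-(Complex.I * l) * x - (x : ℂ) ^ 2 / 2)) x := by
  have h1 : HasDerivAt (fun z : ℂ => -(Complex.I * l) * z - z ^ 2 / 2)
      (-(Complex.I * l) - (x : ℂ)) (x : ℂ) := by
    have := ((hasDerivAt_id ((x : ℝ) : ℂ)).const_mul (-(Complex.I * l))).sub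
      ((hasDerivAt_pow 2 ((x : ℝ) : ℂ)).div_const 2)
    refine this.congr_deriv ?_
    push_cast
    ring
  have h2 := h1.cexp.comp_ofReal
  rw [show ((-(Complex.I * l) - x) * Complex.exp (-(Complex.I * l) * x - (x : ℂ) ^ 2 / 2))
      = (Complex.exp (-(Complex.I * l) * x - (x : ℂ) ^ 2 / 2) * (-(Complex.I * l) - x)) from
    mul_comm _ _]
  exact h2

lemma key_identity (l : ℝ) : (Complex.I * l) * Fint l = 1 - Rint l := by
  have hlim : Tendsto (fun x : ℝ => Complex.exp (-(Complex.I * l) * x - (x : ℂ) ^ 2 / 2))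
      atTop (𝓝 0) := by
    rw [tendsto_zero_iff_norm_tendsto_zero]
    simp only [norm_aux]
    have h1 : Tendsto (fun x : ℝ => (1/2) * x ^ 2) atTop atTop :=
      (tendsto_pow_atTop (by norm_num)).const_mul_atTop (by norm_num)
    have h2 := Real.tendsto_exp_neg_atTop_nhds_zero.comp h1
    refine h2.congr fun x => ?_
    simp only [Function.comp]
    congr 1
    ring
  have hint : IntegrableOn (fun x : ℝ =>
      (-(Complex.I * l) - x) * Complex.exp (-(Complex.I * l) * x - (x : ℂ) ^ 2 / 2))
      (Set.Ioi 0) := by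
    have : (fun x : ℝ =>
        (-(Complex.I * l) - x) * Complex.exp (-(Complex.I * l) * x - (x : ℂ) ^ 2 / 2))
        = fun x : ℝ => (-(Complex.I * l)) * Complex.exp (-(Complex.I * l) * x - (x : ℂ) ^ 2 / 2)
          - (x : ℂ) * Complex.exp (-(Complex.I * l) * x - (x : ℂ) ^ 2 / 2) := by
      funext x; ring
    rw [this]
    exact ((integrableG l).const_mul _).sub (integrableXG l)
  have hftc := integral_Ioi_of_hasDerivAt_of_tendsto' (a := 0)
    (fun x _ => hasDerivG l x) hint hlim
  have h0 : Complex.exp (-(Complex.I * l) * (0:ℝ) - ((0:ℝ) : ℂ) ^ 2 / 2) = 1 := by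
    norm_num
  rw [h0] at hftc
  have hsplit : ∫ x in Set.Ioi (0:ℝ),
      (-(Complex.I * l) - x) * Complex.exp (-(Complex.I * l) * x - (x : ℂ) ^ 2 / 2)
      = (-(Complex.I * l)) * Fint l - Rint l := by
    rw [show (fun x : ℝ =>
        (-(Complex.I * l) - x) * Complex.exp (-(Complex.I * l) * x - (x : ℂ) ^ 2 / 2))
        = fun x : ℝ => (-(Complex.I * l)) * Complex.exp (-(Complex.I * l) * x - (x : ℂ) ^ 2 / 2)
          - (x : ℂ) * Complex.exp (-(Complex.I * l) * x - (x : ℂ) ^ 2 / 2) from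
      funext fun x => by ring]
    rw [integral_sub ((integrableG l).const_mul _) (integrableXG l),
      MeasureTheory.integral_const_mul]
    rfl
  rw [hsplit] at hftc
  have : (-(Complex.I * l)) * Fint l - Rint l = 0 - 1 := hftc
  linear_combination -this

lemma tendsto_Rint : Tendsto Rint (cocompact ℝ) (𝓝 0) := by
  set f : ℝ → ℂ := Set.indicator (Set.Ioi 0)
    (fun x : ℝ => (x : ℂ) * Complex.exp (-((x : ℂ)) ^ 2 / 2)) with hf
  have hRL := Real.tendsto_integral_exp_smul_cocompact f
  have hcomp : Tendsto (fun l : ℝ => l / (2 * Real.pi)) (cocompact ℝ) (cocompact ℝ) := by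
    rw [cocompact_eq_atBot_atTop]
    rw [Filter.tendsto_sup]
    constructor
    · exact (tendsto_id.atBot_div_const (by positivity)).mono_right le_sup_left
    · exact (tendsto_id.atTop_div_const (by positivity)).mono_right le_sup_right
  have heq : ∀ l : ℝ, (∫ v : ℝ, 𝐞 (-(v * (l / (2 * Real.pi)))) • f v) = Rint l := by
    intro l
    have hfun : (fun v : ℝ => 𝐞 (-(v * (l / (2 * Real.pi)))) • f v)
        = Set.indicator (Set.Ioi 0)
          (fun x : ℝ => (x : ℂ) * Complex.exp (-(Complex.I * l) * x - (x : ℂ) ^ 2 / 2)) := by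
      funext v
      by_cases hv : v ∈ Set.Ioi (0:ℝ)
      · rw [hf, Set.indicator_of_mem hv, Set.indicator_of_mem hv, Circle.smul_def,
          Real.fourierChar_apply]
        rw [show (2 * Real.pi * -(v * (l / (2 * Real.pi))) : ℝ) = -(v * l) by
          field_simp]
        rw [show (-(Complex.I * l) * v - (v : ℂ) ^ 2 / 2)
            = ((-(v * l) : ℝ) : ℂ) * Complex.I + (-((v : ℂ)) ^ 2 / 2) by push_cast; ring]
        rw [Complex.exp_add, smul_eq_mul]
        ring
      · rw [hf, Set.indicator_of_notMem hv, Set.indicator_of_notMem hv, smul_zero]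
    rw [hfun, integral_indicator measurableSet_Ioi]
    rfl
  have := hRL.comp hcomp
  exact this.congr heq

lemma hpt (l : ℝ) :
    (1 / (Real.sqrt (2 * Real.pi) * Real.Gamma 2
        * ‖parabolicDm1 (Complex.I * l)‖ ^ 2))
      / (l ^ 2 * Real.exp (-l ^ 2 / 2))
    = 1 / (Real.sqrt (2 * Real.pi) * ‖1 - Rint l‖ ^ 2) := by
  have hD : ‖parabolicDm1 (Complex.I * l)‖
      = Real.exp (l ^ 2 / 4) * ‖Fint l‖ := by
    unfold parabolicDm1
    rw [norm_mul]
    congr 1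
    rw [show (-(Complex.I * (l:ℂ)) ^ 2 / 4) = ((l ^ 2 / 4 : ℝ) : ℂ) by
      rw [mul_pow, Complex.I_sq]; push_cast; ring]
    rw [Complex.norm_exp, Complex.ofReal_re]
  have habs2 : ‖1 - Rint l‖ ^ 2 = l ^ 2 * ‖Fint l‖ ^ 2 := by
    rw [← key_identity l, norm_mul, mul_pow, norm_mul, Complex.norm_I, one_mul,
      Complex.norm_real, Real.norm_eq_abs, _root_.sq_abs]
  rw [hD, habs2, Real.Gamma_two, div_div]
  congr 1
  have hexp : Real.exp (l ^ 2 / 4) ^ 2 * Real.exp (-l ^ 2 / 2) = 1 := by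
    rw [sq, ← Real.exp_add, ← Real.exp_add,
      show l ^ 2 / 4 + l ^ 2 / 4 + -l ^ 2 / 2 = 0 by ring, Real.exp_zero]
  calc Real.sqrt (2 * Real.pi) * 1 * (Real.exp (l ^ 2 / 4) * ‖Fint l‖) ^ 2
        * (l ^ 2 * Real.exp (-l ^ 2 / 2))
      = Real.sqrt (2 * Real.pi) * (l ^ 2 * ‖Fint l‖ ^ 2)
        * (Real.exp (l ^ 2 / 4) ^ 2 * Real.exp (-l ^ 2 / 2)) := by ring
    _ = Real.sqrt (2 * Real.pi) * (l ^ 2 * ‖Fint l‖ ^ 2) := by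
        rw [hexp, mul_one]

/-- the density `ρ₁(λ) = 1/(√(2π)·Γ(2)·|D₋₁(iλ)|²)` has the tail
asymptotic `ρ₁(λ) ~ K·λ²·e^{-λ²/2}` as `|λ| → ∞`, for some constant `K > 0`. -/
theorem stmt_10 :
    ∃ K : ℝ, 0 < K ∧
      Tendsto (fun l : ℝ =>
          (1 / (Real.sqrt (2 * Real.pi) * Real.Gamma 2
              * ‖parabolicDm1 (Complex.I * l)‖ ^ 2))
            / (l ^ 2 * Real.exp (-l ^ 2 / 2)))
        (Filter.atTop ⊔ Filter.atBot) (nhds K) := by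
  have hSpos : (0:ℝ) < Real.sqrt (2 * Real.pi) := Real.sqrt_pos.2 (by positivity)
  refine ⟨1 / (Real.sqrt (2 * Real.pi) * 1), by positivity, ?_⟩
  have hR : Tendsto Rint (atTop ⊔ atBot) (𝓝 0) := by
    have := tendsto_Rint
    rwa [cocompact_eq_atBot_atTop, sup_comm] at this
  have h1 : Tendsto (fun l : ℝ => (1:ℂ) - Rint l) (atTop ⊔ atBot) (𝓝 1) := by
    simpa using tendsto_const_nhds.sub hR
  have hN : Tendsto (fun l : ℝ => Real.sqrt (2 * Real.pi) * ‖1 - Rint l‖ ^ 2)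
      (atTop ⊔ atBot) (𝓝 (Real.sqrt (2 * Real.pi) * 1)) := by
    have h2 : Tendsto (fun l : ℝ => ‖1 - Rint l‖ ^ 2) (atTop ⊔ atBot) (𝓝 1) := by
      have := (h1.norm.pow 2)
      simpa using this
    simpa using h2.const_mul (Real.sqrt (2 * Real.pi))
  have hmain : Tendsto
      (fun l : ℝ => 1 / (Real.sqrt (2 * Real.pi) * ‖1 - Rint l‖ ^ 2))
      (atTop ⊔ atBot) (𝓝 (1 / (Real.sqrt (2 * Real.pi) * 1))) :=
    tendsto_const_nhds.div hN (by positivity)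
  exact hmain.congr fun l => (hpt l).symm
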